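/- arXiv:1801.02901 — 2 statements merged into one kernel-verified Lean document; each statement's English description precedes it below -/
import Mathlib

section
/- Let n be a positive natural number, let A be a real symmetric n × n matrix, let λ be a real number such that vᵀ A v ≥ λ·‖v‖² for every v ∈ ℝⁿ, let d ∈ ℝⁿ with d_i ≠ 0 for all i, and let b ∈ ℝⁿ. If λ + min_{i} (b_i / d_i²) ≥ 0, then the matrix diag(d) · A · diag(d) + diag(b) is positive semidefinite, i.e. uᵀ (diag(d) A diag(d) + diag(b)) u ≥ 0 for all u ∈ ℝⁿ. (This is the linear-algebra core of Theorem 2: the Hessian of a composite E(s(a)), which equals D A D + diag(b) with D = diag(s'(a)) and b_i = (∂E/∂c)_i s''(a_i), is positive semidefinite under the convexification inequality.) -/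
/-!
Substituting `v = d * u` turns `uᵀ (D A D) u` into `vᵀ A v ≥ λ ‖v‖²`. Since `d i ≠ 0`, the
convexification inequality says exactly `b i ≥ -λ d i²` for every `i`, so the diagonal term
`∑ b i u i²` is at least `-λ ∑ (d i u i)² = -λ ‖v‖²`, and the two bounds cancel.
-/

open Matrix

section DiagonalCongruence

variable {ι R : Type*} [Fintype ι] [DecidableEq ι]

theorem dotProduct_diagonal_mul_mul_diagonal_mulVec [CommSemiring R] (d u : ι → R)
    (A : Matrix ι ι R) :
    u ⬝ᵥ ((diagonal d * A * diagonal d) *ᵥ u) = (d * u) ⬝ᵥ (A *ᵥ (d * u)) := by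
  have hleft : u ᵥ* diagonal d = d * u := funext fun i => by
    rw [vecMul_diagonal, Pi.mul_apply, mul_comm]
  have hright : diagonal d *ᵥ u = d * u := funext fun i => mulVec_diagonal d u i
  rw [← mulVec_mulVec, ← mulVec_mulVec, dotProduct_mulVec, hleft, hright]

theorem dotProduct_diagonal_mulVec_self [CommSemiring R] (b u : ι → R) :
    u ⬝ᵥ (diagonal b *ᵥ u) = ∑ i, b i * u i ^ 2 := by
  simp only [mulVec_diagonal, dotProduct, sq]
  exact Finset.sum_congr rfl fun i _ => by ring

theorem dotProduct_diagonal_mul_mul_diagonal_add_diagonal_mulVec_nonneg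
    {A : Matrix ι ι ℝ} {lam : ℝ} (hA : ∀ v, lam * ∑ i, v i ^ 2 ≤ v ⬝ᵥ (A *ᵥ v))
    {d b : ι → ℝ} (hb : ∀ i, -lam * d i ^ 2 ≤ b i) (u : ι → ℝ) :
    0 ≤ u ⬝ᵥ ((diagonal d * A * diagonal d + diagonal b) *ᵥ u) := by
  rw [add_mulVec, dotProduct_add, dotProduct_diagonal_mul_mul_diagonal_mulVec,
    dotProduct_diagonal_mulVec_self]
  have hshift : ∑ i, -lam * (d * u) i ^ 2 ≤ ∑ i, b i * u i ^ 2 :=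
    Finset.sum_le_sum fun i _ => by
      rw [Pi.mul_apply, mul_pow, ← mul_assoc]
      exact mul_le_mul_of_nonneg_right (hb i) (sq_nonneg _)
  calc (0 : ℝ) = lam * ∑ i, (d * u) i ^ 2 + ∑ i, -lam * (d * u) i ^ 2 := by
        rw [← Finset.mul_sum]; ring
    _ ≤ _ := add_le_add (hA _) hshift

end DiagonalCongruence

theorem neg_mul_sq_le_of_add_nonneg_of_le_div_sq {lam m b d : ℝ} (hd : d ≠ 0)
    (hlam : 0 ≤ lam + m) (hm : m ≤ b / d ^ 2) : -lam * d ^ 2 ≤ b := by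
  have hd2 : 0 < d ^ 2 := by positivity
  calc -lam * d ^ 2 ≤ m * d ^ 2 := mul_le_mul_of_nonneg_right (by linarith) hd2.le
    _ ≤ b / d ^ 2 * d ^ 2 := mul_le_mul_of_nonneg_right hm hd2.le
    _ = b := div_mul_cancel₀ b hd2.ne'

theorem convexification_inequality_psd_general
    (n : ℕ) (hn : 0 < n)
    (A : Matrix (Fin n) (Fin n) ℝ)
    (lam : ℝ)
    (hlam : ∀ v : Fin n → ℝ,
      dotProduct v (A.mulVec v) ≥ lam * ∑ i, v i ^ 2)
    (d : Fin n → ℝ) (hd : ∀ i, d i ≠ 0)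
    (b : Fin n → ℝ)
    (hmin : lam +
        Finset.univ.inf' (Finset.univ_nonempty_iff.mpr (Fin.pos_iff_nonempty.mp hn))
          (fun i => b i / (d i) ^ 2) ≥ 0) :
    ∀ u : Fin n → ℝ,
      dotProduct u
        ((Matrix.diagonal d * A * Matrix.diagonal d + Matrix.diagonal b).mulVec u) ≥ 0 :=
  dotProduct_diagonal_mul_mul_diagonal_add_diagonal_mulVec_nonneg hlam fun i =>
    neg_mul_sq_le_of_add_nonneg_of_le_div_sq (hd i) hmin
      (Finset.inf'_le (fun i => b i / d i ^ 2) (Finset.mem_univ i))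

theorem convexification_inequality_psd
    (n : ℕ) (hn : 0 < n)
    (A : Matrix (Fin n) (Fin n) ℝ) (hA : A.IsSymm)
    (lam : ℝ)
    (hlam : ∀ v : Fin n → ℝ,
      dotProduct v (A.mulVec v) ≥ lam * ∑ i, v i ^ 2)
    (d : Fin n → ℝ) (hd : ∀ i, d i ≠ 0)
    (b : Fin n → ℝ)
    (hmin : lam +
        Finset.univ.inf' (Finset.univ_nonempty_iff.mpr (Fin.pos_iff_nonempty.mp hn))
          (fun i => b i / (d i) ^ 2) ≥ 0) :
    ∀ u : Fin n → ℝ,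
      dotProduct u
        ((Matrix.diagonal d * A * Matrix.diagonal d + Matrix.diagonal b).mulVec u) ≥ 0 :=
  convexification_inequality_psd_general n hn A lam hlam d hd b hmin
end

section
/- Let n be a positive natural number, let f : EuclideanSpace ℝ (Fin n) → ℝ be twice continuously differentiable, let s : ℝ → ℝ be twice continuously differentiable, and let S be the coordinatewise map (S a)_i = s(a_i). Fix a point a ∈ ℝⁿ with s'(a_i) ≠ 0 for all i. Suppose there is a real λ such that the Hessian quadratic form of f at S(a) satisfies Σ_{i,j} (∂²f/∂c_i∂c_j)(S a)·v_i·v_j ≥ λ·‖v‖² for all v ∈ ℝⁿ, and that λ + min_i ((∂f/∂c_i)(S a)·s''(a_i)) / (s'(a_i))² ≥ 0. Then the Hessian of g = f ∘ S at a is positive semidefinite: Σ_{i,j} (∂²g/∂a_i∂a_j)(a)·u_i·u_j ≥ 0 for all u ∈ ℝⁿ. (Theorem 2 of the paper, single-sample case: a function node satisfying the convexification inequality preserves the convex condition.) -/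
/-! With `vᵢ = s'(aᵢ) uᵢ`, the chain rule gives
`∂ᵢ∂ⱼ(f ∘ S)(a) = s'(aᵢ) s'(aⱼ) ∂ᵢ∂ⱼf(S a) + δᵢⱼ ∂ᵢf(S a) s''(aᵢ)`, so the Hessian form of `f ∘ S`
at `u` is the Hessian form of `f` at `v` plus `∑ᵢ (∂ᵢf(S a) s''(aᵢ) / s'(aᵢ)²) vᵢ²`. The first
term is at least `λ ‖v‖²`, the second at least `(minᵢ …) ‖v‖²`, and the convexification
inequality makes the total nonnegative. -/

open Finset

section Coordinatewise

variable {ι : Type*} [Fintype ι] {s : ℝ → ℝ}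
  {S : EuclideanSpace ℝ ι → EuclideanSpace ℝ ι}

theorem contDiff_coordinatewise (hS : ∀ x i, S x i = s (x i)) {k : WithTop ℕ∞}
    (hs : ContDiff ℝ k s) : ContDiff ℝ k S :=
  contDiff_euclidean.2 fun i => by
    simp only [hS]
    exact hs.comp (PiLp.proj (𝕜 := ℝ) 2 (fun _ : ι => ℝ) i).contDiff

variable [DecidableEq ι]

theorem toEuclideanCLM_diagonal_single (d : ι → ℝ) (j : ι) :
    Matrix.toEuclideanCLM (𝕜 := ℝ) (Matrix.diagonal d) (EuclideanSpace.single j 1)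
      = d j • EuclideanSpace.single j 1 := by
  ext i
  by_cases h : i = j <;> simp [EuclideanSpace.single, Matrix.mulVec_diagonal, h]

theorem hasFDerivAt_coordinatewise (hS : ∀ x i, S x i = s (x i)) {x : EuclideanSpace ℝ ι}
    (hs : ∀ i, DifferentiableAt ℝ s (x i)) :
    HasFDerivAt S (Matrix.toEuclideanCLM (𝕜 := ℝ) (Matrix.diagonal fun i => deriv s (x i))) x := by
  rw [← hasFDerivWithinAt_univ, hasFDerivWithinAt_euclidean]
  intro i
  simp only [hS]
  refine HasFDerivAt.hasFDerivWithinAt <|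
    ((hs i).hasDerivAt.comp_hasFDerivAt x (PiLp.hasFDerivAt_apply (𝕜 := ℝ) 2 x i)).congr_fderiv ?_
  ext v
  simp [Matrix.mulVec_diagonal]

theorem fderiv_comp_coordinatewise_single (hS : ∀ x i, S x i = s (x i))
    {f : EuclideanSpace ℝ ι → ℝ} {x : EuclideanSpace ℝ ι} (hf : DifferentiableAt ℝ f (S x))
    (hs : ∀ i, DifferentiableAt ℝ s (x i)) (j : ι) :
    fderiv ℝ (f ∘ S) x (EuclideanSpace.single j 1)
      = deriv s (x j) * fderiv ℝ f (S x) (EuclideanSpace.single j 1) := by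
  rw [(hf.hasFDerivAt.comp x (hasFDerivAt_coordinatewise hS hs)).fderiv,
    ContinuousLinearMap.comp_apply, toEuclideanCLM_diagonal_single, map_smul, smul_eq_mul]

theorem iteratedFDeriv_two_comp_coordinatewise_single (hS : ∀ x i, S x i = s (x i))
    {f : EuclideanSpace ℝ ι → ℝ} (hf : ContDiff ℝ 2 f) (hs : ContDiff ℝ 2 s)
    (a : EuclideanSpace ℝ ι) (i j : ι) :
    iteratedFDeriv ℝ 2 (f ∘ S) a ![EuclideanSpace.single i 1, EuclideanSpace.single j 1]
      = deriv s (a i) * deriv s (a j)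
          * iteratedFDeriv ℝ 2 f (S a) ![EuclideanSpace.single i 1, EuclideanSpace.single j 1]
        + if i = j then
            fderiv ℝ f (S a) (EuclideanSpace.single i 1) * deriv (deriv s) (a i) else 0 := by
  set e : ι → EuclideanSpace ℝ ι := fun i => EuclideanSpace.single i 1
  have hs' : Differentiable ℝ s := hs.differentiable two_ne_zero
  have hds : Differentiable ℝ (deriv s) :=
    ((contDiff_succ_iff_deriv (n := 1)).1 hs).2.2.differentiable one_ne_zero
  have hdf : Differentiable ℝ (fderiv ℝ f) := (hf.fderiv_right le_rfl).differentiable one_ne_zero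
  have hdg : Differentiable ℝ (fderiv ℝ (f ∘ S)) :=
    ((hf.comp (contDiff_coordinatewise hS hs)).fderiv_right le_rfl).differentiable one_ne_zero
  have h_partial : (fun x => fderiv ℝ (f ∘ S) x (e j))
      = fun x => deriv s (x j) * fderiv ℝ f (S x) (e j) := by
    funext x
    exact fderiv_comp_coordinatewise_single hS (hf.differentiable two_ne_zero _) (fun i => hs' _) j
  -- Two derivatives at `a` of the partial derivative `x ↦ ∂ⱼ(f ∘ S) x = s'(x j) ∂ⱼf(S x)`:
  -- one through `fderiv (fderiv (f ∘ S))`, one by the product and chain rules.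
  have h_lhs : HasFDerivAt (fun x => fderiv ℝ (f ∘ S) x (e j))
      ((ContinuousLinearMap.apply ℝ ℝ (e j)).comp (fderiv ℝ (fderiv ℝ (f ∘ S)) a)) a :=
    (ContinuousLinearMap.apply ℝ ℝ (e j)).hasFDerivAt.comp a (hdg a).hasFDerivAt
  rw [h_partial] at h_lhs
  have h_rhs := ((hds (a j)).hasDerivAt.comp_hasFDerivAt a (PiLp.hasFDerivAt_apply (𝕜 := ℝ) 2 a j)).mul
    ((ContinuousLinearMap.apply ℝ ℝ (e j)).hasFDerivAt.comp a
      ((hdf (S a)).hasFDerivAt.comp a (hasFDerivAt_coordinatewise hS fun i => hs' (a i))))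
  have h_entry := congrArg (· (e i)) (h_lhs.unique h_rhs)
  simp only [ContinuousLinearMap.comp_apply, ContinuousLinearMap.apply_apply, Function.comp_apply,
    add_apply, smul_apply, smul_eq_mul, PiLp.proj_apply] at h_entry
  rw [iteratedFDeriv_two_apply, iteratedFDeriv_two_apply]
  simp only [Matrix.cons_val_zero, Matrix.cons_val_one]
  rw [h_entry, toEuclideanCLM_diagonal_single, map_smul, smul_apply, smul_eq_mul,
    PiLp.single_apply]
  obtain rfl | h := eq_or_ne i j
  · simp only [if_true]
    ring
  · simp only [if_neg h, if_neg h.symm]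
    ring

end Coordinatewise

theorem quadratic_form_scaled_add_diagonal_nonneg {ι : Type*} [Fintype ι] [DecidableEq ι]
    (H : ι → ι → ℝ) (d c : ι → ℝ) (lam : ℝ) (hd : ∀ i, d i ≠ 0)
    (hH : ∀ v : ι → ℝ, lam * ∑ i, v i ^ 2 ≤ ∑ i, ∑ j, H i j * v i * v j)
    (hc : ∀ i, 0 ≤ lam + c i / d i ^ 2) (u : ι → ℝ) :
    0 ≤ ∑ i, ∑ j, (d i * d j * H i j + if i = j then c i else 0) * u i * u j := by
  set v : ι → ℝ := fun i => d i * u i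
  calc 0 ≤ ∑ i, (lam + c i / d i ^ 2) * v i ^ 2 :=
        sum_nonneg fun i _ => mul_nonneg (hc i) (sq_nonneg _)
    _ = lam * ∑ i, v i ^ 2 + ∑ i, c i * u i ^ 2 := by
        rw [mul_sum, ← sum_add_distrib]
        refine sum_congr rfl fun i _ => ?_
        field_simp [hd i]
        ring
    _ ≤ ∑ i, ∑ j, H i j * v i * v j + ∑ i, c i * u i ^ 2 := by gcongr; exact hH v
    _ = _ := by
        simp only [add_mul, sum_add_distrib, ite_mul, zero_mul, sum_ite_eq, mem_univ, if_true]
        congr 1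
        · exact sum_congr rfl fun i _ => sum_congr rfl fun j _ => by ring
        · exact sum_congr rfl fun i _ => by ring

theorem function_node_preserves_convex_condition
    (n : ℕ) (hn : 0 < n)
    (f : EuclideanSpace ℝ (Fin n) → ℝ) (hf : ContDiff ℝ 2 f)
    (s : ℝ → ℝ) (hs : ContDiff ℝ 2 s)
    (S : EuclideanSpace ℝ (Fin n) → EuclideanSpace ℝ (Fin n))
    (hS : ∀ a i, S a i = s (a i))
    (a : EuclideanSpace ℝ (Fin n))
    (hd : ∀ i, deriv s (a i) ≠ 0)
    (lam : ℝ)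
    (hlam : ∀ v : Fin n → ℝ,
      ∑ i, ∑ j, (iteratedFDeriv ℝ 2 f (S a)
          ![EuclideanSpace.single i 1, EuclideanSpace.single j 1]) * v i * v j
        ≥ lam * ∑ i, v i ^ 2)
    (hineq : lam +
        Finset.univ.inf' (Finset.univ_nonempty_iff.mpr (Fin.pos_iff_nonempty.mp hn))
          (fun i =>
            fderiv ℝ f (S a) (EuclideanSpace.single i 1) * deriv (deriv s) (a i)
              / (deriv s (a i)) ^ 2) ≥ 0) :
    ∀ u : Fin n → ℝ,
      ∑ i, ∑ j, (iteratedFDeriv ℝ 2 (f ∘ S) a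
          ![EuclideanSpace.single i 1, EuclideanSpace.single j 1]) * u i * u j ≥ 0 := by
  intro u
  simp only [iteratedFDeriv_two_comp_coordinatewise_single hS hf hs a]
  exact quadratic_form_scaled_add_diagonal_nonneg _ _
    (fun i => fderiv ℝ f (S a) (EuclideanSpace.single i 1) * deriv (deriv s) (a i)) lam hd hlam
    (fun i => hineq.trans (add_le_add_right (inf'_le _ (mem_univ i)) lam)) u
end
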